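/- Let γ ∈ [0,1] and α > 0, and define for x ∈ Ω and ξ ∈ ∂Ω the kernel F(x,ξ) := d(x)^{1−γ} d_Σ(x)^{α} |x−ξ|^{−N}. Then there exists a constant C > 0, depending only on N, α, γ and diam(Ω), such that for every ξ ∈ ∂Ω and every λ > 0, ∫_{{x ∈ Ω : F(x,ξ) > λ}} d(x) d_Σ(x)^{−α} dx ≤ C λ^{−(N+1)/(N−1+γ)}. -/

import Mathlib

/-!
On the level set `{F(·, ξ) > λ}` we have `d ≤ |x - ξ|` and `d_Σ ≤ diam Ω`, so
`λ < F ≤ (diam Ω)^α |x - ξ|^{-(N-1+γ)}` confines it to a ball around `ξ` of radius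
`R ≍ λ^{-1/(N-1+γ)}`; there the weight `d d_Σ^{-α}` is at most `d^{2-γ} |x-ξ|^{-N} / λ`,
hence at most `|x - ξ|^{-(N-2+γ)} / λ`. Since `N - 2 + γ < N`, this Riesz-type kernel is
integrable on balls and, by scaling, its integral over the ball of radius `R` is a constant
times `R^{2-γ}`; collecting the powers of `λ` gives the exponent `-(N+1)/(N-1+γ)`.
-/

open MeasureTheory Set Metric Module

section RieszKernel

variable {E : Type*} [NormedAddCommGroup E] [NormedSpace ℝ E] [FiniteDimensional ℝ E]
  [MeasurableSpace E] [BorelSpace E] (μ : Measure E) [μ.IsAddHaarMeasure]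

theorem setLIntegral_ball_zero_rpow_neg_norm (s : ℝ) {R : ℝ} (hR : 0 < R) :
    ∫⁻ x in ball 0 R, ENNReal.ofReal (‖x‖ ^ (-s)) ∂μ =
      ENNReal.ofReal (R ^ ((finrank ℝ E : ℝ) - s)) *
        ∫⁻ x in ball 0 1, ENNReal.ofReal (‖x‖ ^ (-s)) ∂μ := by
  have hmeas : Measurable fun x : E => ENNReal.ofReal (‖x‖ ^ (-s)) := by fun_prop
  have hpre : (R • · : E → E) ⁻¹' ball 0 R = ball 0 1 := by
    ext x; simp [norm_smul, abs_of_pos hR, hR]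
  have hpt (x : E) : ENNReal.ofReal (‖R • x‖ ^ (-s)) =
      ENNReal.ofReal (R ^ (-s)) * ENNReal.ofReal (‖x‖ ^ (-s)) := by
    rw [norm_smul, Real.norm_of_nonneg hR.le, Real.mul_rpow hR.le (norm_nonneg x),
      ENNReal.ofReal_mul (by positivity)]
  -- `x ↦ R • x` pushes `μ` forward to `R ^ (-dim E) • μ` and maps `ball 0 1` onto `ball 0 R`.
  have hscale := setLIntegral_map (μ := μ) (measurableSet_ball (x := (0 : E)) (ε := R)) hmeas
    (measurable_const_smul R)
  rw [Measure.map_addHaar_smul μ hR.ne', Measure.restrict_smul, lintegral_smul_measure, hpre]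
    at hscale
  simp_rw [hpt, lintegral_const_mul _ hmeas] at hscale
  rw [abs_of_pos (by positivity), ENNReal.ofReal_inv_of_pos (by positivity), smul_eq_mul] at hscale
  have hRd : ENNReal.ofReal (R ^ finrank ℝ E) ≠ 0 := by simp [hR]
  rw [← one_mul (∫⁻ x in ball 0 R, _ ∂μ), ← ENNReal.mul_inv_cancel hRd ENNReal.ofReal_ne_top,
    mul_assoc, hscale, ← mul_assoc, ← ENNReal.ofReal_mul (by positivity), ← Real.rpow_natCast,
    ← Real.rpow_add hR, sub_eq_add_neg]

theorem setLIntegral_ball_rpow_neg_dist (ξ : E) (s : ℝ) {R : ℝ} (hR : 0 < R) :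
    ∫⁻ x in ball ξ R, ENNReal.ofReal (dist x ξ ^ (-s)) ∂μ =
      ENNReal.ofReal (R ^ ((finrank ℝ E : ℝ) - s)) *
        ∫⁻ x in ball 0 1, ENNReal.ofReal (‖x‖ ^ (-s)) ∂μ := by
  rw [← setLIntegral_ball_zero_rpow_neg_norm μ s hR,
    ← (measurePreserving_add_left μ ξ).setLIntegral_comp_preimage measurableSet_ball
      (by fun_prop : Measurable fun x : E => ENNReal.ofReal (dist x ξ ^ (-s)))]
  simp

theorem setLIntegral_unitBall_rpow_neg_norm_lt_top (hd : 1 ≤ finrank ℝ E) {s : ℝ}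
    (hs : s < finrank ℝ E) :
    ∫⁻ x in ball 0 1, ENNReal.ofReal (‖x‖ ^ (-s)) ∂μ < ⊤ :=
  (integrableOn_ball_of_norm_le_rpow (μ := μ) (f := fun x : E => ‖x‖ ^ (-s)) (C := 1) hd hs
    (.of_forall fun x => by simp [abs_of_nonneg (Real.rpow_nonneg (norm_nonneg x) _)])
    (measurable_norm.pow_const _).aestronglyMeasurable).lintegral_lt_top

end RieszKernel

theorem infDist_le_diam_of_subset_closure {X : Type*} [PseudoMetricSpace X] {Ω S : Set X}
    (hΩ : Bornology.IsBounded Ω) (hS : S ⊆ closure Ω) (hSne : S.Nonempty) {x : X}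
    (hx : x ∈ Ω) : infDist x S ≤ diam Ω := by
  obtain ⟨σ, hσ⟩ := hSne
  calc infDist x S ≤ dist x σ := infDist_le_dist_of_mem hσ
    _ ≤ diam (closure Ω) := dist_le_diam_of_mem hΩ.closure (subset_closure hx) (hS hσ)
    _ = diam Ω := diam_closure Ω

section KernelInequalities

variable {d t r D l γ α n : ℝ}

theorem pos_of_lt_kernel (ht : 0 ≤ t) (hr : 0 ≤ r) (hl : 0 < l) (hα : α ≠ 0) (hn : n ≠ 0)
    (h : l < d ^ (1 - γ) * t ^ α * r ^ (-n)) : 0 < t ∧ 0 < r := by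
  refine ⟨ht.lt_of_ne ?_, hr.lt_of_ne ?_⟩ <;> rintro rfl
  · rw [Real.zero_rpow hα, mul_zero, zero_mul] at h
    exact hl.not_gt h
  · rw [Real.zero_rpow (neg_ne_zero.2 hn), mul_zero] at h
    exact hl.not_gt h

theorem lt_div_rpow_inv_of_lt_kernel (hd : 0 ≤ d) (hdr : d ≤ r) (ht : 0 ≤ t) (htD : t ≤ D)
    (hγ : γ ≤ 1) (hα : 0 < α) (hl : 0 < l) (hn : n ≠ 0) (hβ : 0 < n - 1 + γ)
    (h : l < d ^ (1 - γ) * t ^ α * r ^ (-n)) : r < (D ^ α / l) ^ (n - 1 + γ)⁻¹ := by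
  obtain ⟨-, hr⟩ := pos_of_lt_kernel ht (hd.trans hdr) hl hα.ne' hn h
  have hlt : l < D ^ α * r ^ (-(n - 1 + γ)) :=
    calc l < d ^ (1 - γ) * t ^ α * r ^ (-n) := h
      _ ≤ r ^ (1 - γ) * D ^ α * r ^ (-n) := by gcongr
      _ = D ^ α * r ^ (-(n - 1 + γ)) := by
        rw [mul_right_comm, mul_comm, ← Real.rpow_add hr]; ring_nf
  rw [Real.rpow_neg hr.le, ← div_eq_mul_inv, lt_div_iff₀ (by positivity), ← lt_div_iff₀' hl]
    at hlt
  calc r = (r ^ (n - 1 + γ)) ^ (n - 1 + γ)⁻¹ := (Real.rpow_rpow_inv hr.le hβ.ne').symm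
    _ < (D ^ α / l) ^ (n - 1 + γ)⁻¹ := by gcongr

theorem mul_rpow_neg_le_of_lt_kernel (hd : 0 ≤ d) (hdr : d ≤ r) (ht : 0 ≤ t) (hγ : γ ≤ 1)
    (hα : α ≠ 0) (hl : 0 < l) (hn : n ≠ 0) (h : l < d ^ (1 - γ) * t ^ α * r ^ (-n)) :
    d * t ^ (-α) ≤ r ^ (-(n - 2 + γ)) / l := by
  obtain ⟨ht, hr⟩ := pos_of_lt_kernel ht (hd.trans hdr) hl hα hn h
  have hweight : t ^ (-α) ≤ d ^ (1 - γ) * r ^ (-n) / l := by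
    rw [Real.rpow_neg ht.le, le_div_iff₀ hl, inv_mul_le_iff₀ (by positivity)]
    linarith
  calc d * t ^ (-α) ≤ d * (d ^ (1 - γ) * r ^ (-n) / l) := by gcongr
    _ ≤ r * (r ^ (1 - γ) * r ^ (-n) / l) := by gcongr
    _ = r ^ (1 + ((1 - γ) + -n)) / l := by
      rw [Real.rpow_add hr, Real.rpow_add hr, Real.rpow_one]; ring
    _ = r ^ (-(n - 2 + γ)) / l := by ring_nf

end KernelInequalities

section SuperlevelSet

variable {X : Type*} [PseudoMetricSpace X]

def kernelSuperlevelSet (Ω S : Set X) (γ α n : ℝ) (ξ : X) (l : ℝ) : Set X :=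
  {x ∈ Ω | l < infDist x (frontier Ω) ^ (1 - γ) * infDist x S ^ α * dist x ξ ^ (-n)}

variable {Ω S : Set X} {γ α n : ℝ} {ξ : X} {l : ℝ}

theorem kernelSuperlevelSet_subset_ball (hΩ : Bornology.IsBounded Ω) (hS : S ⊆ frontier Ω)
    (hSne : S.Nonempty) (hξ : ξ ∈ frontier Ω) (hγ : γ ≤ 1) (hα : 0 < α) (hl : 0 < l)
    (hn : n ≠ 0) (hβ : 0 < n - 1 + γ) :
    kernelSuperlevelSet Ω S γ α n ξ l ⊆ ball ξ (((diam Ω + 1) ^ α / l) ^ (n - 1 + γ)⁻¹) :=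
  fun x ⟨hx, h⟩ => by
    have htD : infDist x S ≤ diam Ω + 1 :=
      (infDist_le_diam_of_subset_closure hΩ (hS.trans frontier_subset_closure) hSne hx).trans
        (le_add_of_nonneg_right zero_le_one)
    exact lt_div_rpow_inv_of_lt_kernel infDist_nonneg (infDist_le_dist_of_mem hξ) infDist_nonneg
      htD hγ hα hl hn hβ h

theorem setLIntegral_kernelSuperlevelSet_le [MeasurableSpace X] [OpensMeasurableSpace X]
    (μ : Measure X) (hΩ : Bornology.IsBounded Ω) (hS : S ⊆ frontier Ω) (hSne : S.Nonempty)
    (hξ : ξ ∈ frontier Ω) (hγ : γ ≤ 1) (hα : 0 < α) (hl : 0 < l) (hn : n ≠ 0)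
    (hβ : 0 < n - 1 + γ) :
    ∫⁻ x in kernelSuperlevelSet Ω S γ α n ξ l,
        ENNReal.ofReal (infDist x (frontier Ω) * infDist x S ^ (-α)) ∂μ ≤
      ENNReal.ofReal l⁻¹ * ∫⁻ x in ball ξ (((diam Ω + 1) ^ α / l) ^ (n - 1 + γ)⁻¹),
        ENNReal.ofReal (dist x ξ ^ (-(n - 2 + γ))) ∂μ := by
  rw [← lintegral_const_mul _ (by fun_prop)]
  calc _ ≤ ∫⁻ x in kernelSuperlevelSet Ω S γ α n ξ l,
          ENNReal.ofReal l⁻¹ * ENNReal.ofReal (dist x ξ ^ (-(n - 2 + γ))) ∂μ :=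
        setLIntegral_mono (by fun_prop) fun x ⟨_, h⟩ => by
          rw [← ENNReal.ofReal_mul (inv_nonneg.2 hl.le), ← div_eq_inv_mul]
          exact ENNReal.ofReal_le_ofReal <| mul_rpow_neg_le_of_lt_kernel infDist_nonneg
            (infDist_le_dist_of_mem hξ) infDist_nonneg hγ hα.ne' hl hn h
    _ ≤ _ := lintegral_mono_set
        (kernelSuperlevelSet_subset_ball hΩ hS hSne hξ hγ hα hl hn hβ)

end SuperlevelSet

theorem inv_mul_div_rpow_inv_rpow {A l β c : ℝ} (hA : 0 ≤ A) (hl : 0 < l) (hβ : β ≠ 0) :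
    l⁻¹ * ((A / l) ^ β⁻¹) ^ c = A ^ (c / β) * l ^ (-((β + c) / β)) := by
  rw [← Real.rpow_mul (by positivity), Real.div_rpow hA hl.le, ← Real.rpow_neg_one l,
    div_eq_mul_inv, ← Real.rpow_neg hl.le, mul_left_comm, ← Real.rpow_add hl]
  congr 2
  · ring
  · field_simp
    ring

theorem stmt_4_general {N : ℕ} (hN : 3 ≤ N) (Ω S : Set (EuclideanSpace ℝ (Fin N)))
    (hΩb : Bornology.IsBounded Ω)
    (hS : S ⊆ frontier Ω) (hSne : S.Nonempty)
    (γ α : ℝ) (hγ0 : 0 ≤ γ) (hγ1 : γ ≤ 1) (hα : 0 < α) :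
    ∃ C > 0, ∀ ξ ∈ frontier Ω, ∀ l : ℝ, 0 < l →
      ∫⁻ x in {x ∈ Ω |
          l < infDist x (frontier Ω) ^ (1 - γ) * infDist x S ^ α * dist x ξ ^ (-(N : ℝ))},
        ENNReal.ofReal (infDist x (frontier Ω) * infDist x S ^ (-α)) ≤
      ENNReal.ofReal (C * l ^ (-(((N : ℝ) + 1) / ((N : ℝ) - 1 + γ)))) := by
  have hN' : (3 : ℝ) ≤ N := by exact_mod_cast hN
  have hdim : finrank ℝ (EuclideanSpace ℝ (Fin N)) = N := finrank_euclideanSpace_fin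
  have hβ : 0 < (N : ℝ) - 1 + γ := by linarith
  set A := (diam Ω + 1) ^ α
  set I := ∫⁻ x in ball (0 : EuclideanSpace ℝ (Fin N)) 1, ENNReal.ofReal (‖x‖ ^ (-(N - 2 + γ)))
  have hI : I ≠ ⊤ :=
    (setLIntegral_unitBall_rpow_neg_norm_lt_top volume (by omega) (by rw [hdim]; linarith)).ne
  refine ⟨(I.toReal + 1) * A ^ ((2 - γ) / (N - 1 + γ)), by positivity, fun ξ hξ l hl => ?_⟩
  set R := (A / l) ^ (N - 1 + γ : ℝ)⁻¹
  calc _ ≤ ENNReal.ofReal l⁻¹ * ∫⁻ x in ball ξ R, ENNReal.ofReal (dist x ξ ^ (-(N - 2 + γ))) :=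
        setLIntegral_kernelSuperlevelSet_le volume hΩb hS hSne hξ hγ1 hα hl (by positivity) hβ
    _ = ENNReal.ofReal l⁻¹ * (ENNReal.ofReal (R ^ (2 - γ)) * I) := by
      rw [setLIntegral_ball_rpow_neg_dist volume ξ _ (by positivity), hdim,
        show (N : ℝ) - (N - 2 + γ) = 2 - γ by ring]
    _ ≤ ENNReal.ofReal l⁻¹ * (ENNReal.ofReal (R ^ (2 - γ)) * ENNReal.ofReal (I.toReal + 1)) := by
      gcongr
      exact (ENNReal.le_ofReal_iff_toReal_le hI (by positivity)).2 (by linarith)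
    _ = _ := by
      rw [← ENNReal.ofReal_mul (by positivity), ← ENNReal.ofReal_mul (by positivity),
        ← mul_assoc, inv_mul_div_rpow_inv_rpow (by positivity) hl hβ.ne',
        show (N : ℝ) + 1 = N - 1 + γ + (2 - γ) by ring]
      ring_nf

/-- Level-set estimate for the Martin-type kernel
`F(x,ξ) = d(x)^{1−γ} d_Σ(x)^{α} |x−ξ|^{−N}` against the weight `d(x) d_Σ(x)^{−α}`. -/
theorem stmt_4 {N : ℕ} (hN : 3 ≤ N) (Ω S : Set (EuclideanSpace ℝ (Fin N)))
    (hΩo : IsOpen Ω) (hΩb : Bornology.IsBounded Ω)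
    (hS : S ⊆ frontier Ω) (hSne : S.Nonempty) (hSc : IsCompact S)
    (γ α : ℝ) (hγ0 : 0 ≤ γ) (hγ1 : γ ≤ 1) (hα : 0 < α) :
    ∃ C > 0, ∀ ξ ∈ frontier Ω, ∀ l : ℝ, 0 < l →
      ∫⁻ x in {x ∈ Ω |
          l < infDist x (frontier Ω) ^ (1 - γ) * infDist x S ^ α * dist x ξ ^ (-(N : ℝ))},
        ENNReal.ofReal (infDist x (frontier Ω) * infDist x S ^ (-α)) ≤
      ENNReal.ofReal (C * l ^ (-(((N : ℝ) + 1) / ((N : ℝ) - 1 + γ)))) :=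
  stmt_4_general hN Ω S hΩb hS hSne γ α hγ0 hγ1 hα
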